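/- Let P be a poset and suppose its Dedekind–MacNeille completion D(P) is modular, i.e., for all closed subsets A, B, C ⊆ P (subsets with L(U(A)) = A, etc.) with A ⊆ C one has L(U(A ∪ B)) ∩ C = L(U(A ∪ (B ∩ C))). Then P is strictly modular: for all x, y, z ∈ P and all X, Z ⊆ P, (1) if x is a lower bound of Z then L(U(x,y) ∪ Z) = L(U({x} ∪ L({y} ∪ Z))), and (2) if every element of L(X) is ≤ z then L(U(L(X) ∪ {y}) ∪ {z}) = L(U(L(X) ∪ L(y,z))). -/

import Mathlib

/-!
Principal ideals `Iic x` and sets of lower bounds `L(X)` are closed, and `U` does not distinguish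
a point from its principal ideal. Both identities are therefore instances of the modular law of
`D(P)`: (1) for the closed sets `Iic x ⊆ L(Z)` and `Iic y`, (2) for `L(X) ⊆ Iic z` and `Iic y`.
-/

open Set

section Bounds

variable {α : Type*} [Preorder α]

theorem lowerBounds_upperBounds_lowerBounds (s : Set α) :
    lowerBounds (upperBounds (lowerBounds s)) = lowerBounds s :=
  gc_upperBounds_lowerBounds.u_l_u_eq_u (OrderDual.toDual s)

theorem lowerBounds_upperBounds_Iic (a : α) : lowerBounds (upperBounds (Iic a)) = Iic a := by
  rw [upperBounds_Iic, lowerBounds_Ici]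

theorem upperBounds_union_Iic (s : Set α) (a : α) :
    upperBounds (s ∪ Iic a) = upperBounds (s ∪ {a}) := by
  rw [upperBounds_union, upperBounds_union, upperBounds_Iic, upperBounds_singleton]

theorem upperBounds_Iic_union (a : α) (s : Set α) :
    upperBounds (Iic a ∪ s) = upperBounds ({a} ∪ s) := by
  rw [union_comm, upperBounds_union_Iic, union_comm]

end Bounds

/-- The modular law of the Dedekind–MacNeille completion, whose elements are the sets with
`L(U(A)) = A`, with join `L(U(A ∪ B))` and meet `∩`. -/
def MacNeilleModular (P : Type*) [Preorder P] : Prop :=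
  ∀ A B C : Set P, lowerBounds (upperBounds A) = A →
    lowerBounds (upperBounds B) = B → lowerBounds (upperBounds C) = C →
    A ⊆ C →
    lowerBounds (upperBounds (A ∪ B)) ∩ C = lowerBounds (upperBounds (A ∪ (B ∩ C)))

namespace MacNeilleModular

variable {P : Type*} [Preorder P]

theorem strictlyModular₁ (hmod : MacNeilleModular P) {x : P} (y : P) {Z : Set P}
    (hx : x ∈ lowerBounds Z) :
    lowerBounds (upperBounds {x, y} ∪ Z) =
      lowerBounds (upperBounds ({x} ∪ lowerBounds ({y} ∪ Z))) := by
  have h := hmod (Iic x) (Iic y) (lowerBounds Z) (lowerBounds_upperBounds_Iic x)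
    (lowerBounds_upperBounds_Iic y) (lowerBounds_upperBounds_lowerBounds Z)
    (fun _ hw _ hs => le_trans hw (hx hs))
  rw [upperBounds_Iic_union, upperBounds_union_Iic, singleton_union, upperBounds_Iic_union] at h
  rw [lowerBounds_union, h, lowerBounds_union, lowerBounds_singleton]

theorem strictlyModular₂ (hmod : MacNeilleModular P) (y : P) {z : P} {X : Set P}
    (hX : ∀ w ∈ lowerBounds X, w ≤ z) :
    lowerBounds (upperBounds (lowerBounds X ∪ {y}) ∪ {z}) =
      lowerBounds (upperBounds (lowerBounds X ∪ lowerBounds {y, z})) := by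
  have h := hmod (lowerBounds X) (Iic y) (Iic z) (lowerBounds_upperBounds_lowerBounds X)
    (lowerBounds_upperBounds_Iic y) (lowerBounds_upperBounds_Iic z) hX
  rw [upperBounds_union_Iic] at h
  rw [lowerBounds_union, lowerBounds_singleton, h, lowerBounds_insert, lowerBounds_singleton]

end MacNeilleModular

/-- If the Dedekind–MacNeille completion of a poset `P` is
modular (the modular law holds for closed subsets, where join is
`A ∨ B = L(U(A ∪ B))` and meet is intersection), then `P` is strictly
modular. -/
theorem stmt_16 {P : Type*} [PartialOrder P]
    (hmod : ∀ A B C : Set P, lowerBounds (upperBounds A) = A →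
      lowerBounds (upperBounds B) = B → lowerBounds (upperBounds C) = C →
      A ⊆ C →
      lowerBounds (upperBounds (A ∪ B)) ∩ C = lowerBounds (upperBounds (A ∪ (B ∩ C)))) :
    (∀ (x y : P) (Z : Set P), x ∈ lowerBounds Z →
      lowerBounds (upperBounds {x, y} ∪ Z) =
        lowerBounds (upperBounds ({x} ∪ lowerBounds ({y} ∪ Z)))) ∧
    (∀ (y z : P) (X : Set P), (∀ w ∈ lowerBounds X, w ≤ z) →
      lowerBounds (upperBounds (lowerBounds X ∪ {y}) ∪ {z}) =
        lowerBounds (upperBounds (lowerBounds X ∪ lowerBounds {y, z}))) :=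
  ⟨fun _ y _ hx => MacNeilleModular.strictlyModular₁ hmod y hx,
    fun y _ _ hX => MacNeilleModular.strictlyModular₂ hmod y hX⟩
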